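/- arXiv:math/9911106 — 6 statements merged into one kernel-verified Lean document; each statement's English description precedes it below -/
import Mathlib

section
/- Let τ : ℝ^d → ℝ be a 1-homogeneous function (τ(sx) = s τ(x) for s ≥ 0) that satisfies the pyramidal inequality: for every simplex with faces Δ_0, …, Δ_d having unit outward normals n_0, …, n_d and areas |Δ_0|, …, |Δ_d|, one has |Δ_0| τ(n_0) ≤ Σ_{i=1}^d |Δ_i| τ(n_i). If d = 2, deduce the triangle inequality τ(u + v) ≤ τ(u) + τ(v) for all u, v ∈ ℝ^2, hence τ is convex. -/
/-- In dimension 2, the pyramidal inequality for a 1-homogeneous function implies the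
triangle inequality (subadditivity), hence convexity. -/
theorem pyramidal_implies_subadditive_and_convex
    (τ : EuclideanSpace ℝ (Fin 2) → ℝ)
    (hhom : ∀ (s : ℝ), 0 ≤ s → ∀ x, τ (s • x) = s * τ x)
    (hpyr : ∀ (n₀ n₁ n₂ : EuclideanSpace ℝ (Fin 2)),
      ‖n₀‖ = 1 → ‖n₁‖ = 1 → ‖n₂‖ = 1 →
      ∀ (l₀ l₁ l₂ : ℝ), 0 ≤ l₀ → 0 ≤ l₁ → 0 ≤ l₂ →
        l₀ • n₀ + l₁ • n₁ + l₂ • n₂ = 0 →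
        l₀ * τ n₀ ≤ l₁ * τ n₁ + l₂ * τ n₂) :
    (∀ u v : EuclideanSpace ℝ (Fin 2), τ (u + v) ≤ τ u + τ v) ∧
    ConvexOn ℝ Set.univ τ := by
  have hτ0 : τ 0 = 0 := by
    have := hhom 0 le_rfl 0
    simpa using this
  -- homogeneous reconstruction
  have hscale : ∀ x : EuclideanSpace ℝ (Fin 2), x ≠ 0 →
      τ x = ‖x‖ * τ (‖x‖⁻¹ • x) := by
    intro x hx
    have hnx : ‖x‖ ≠ 0 := norm_ne_zero_iff.mpr hx
    have := hhom ‖x‖ (norm_nonneg x) (‖x‖⁻¹ • x)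
    rw [smul_smul, mul_inv_cancel₀ hnx, one_smul] at this
    exact this
  have hunit : ∀ x : EuclideanSpace ℝ (Fin 2), x ≠ 0 → ‖‖x‖⁻¹ • x‖ = 1 := by
    intro x hx
    rw [norm_smul, norm_inv, norm_norm, inv_mul_cancel₀ (norm_ne_zero_iff.mpr hx)]
  -- τ is even
  have heven_le : ∀ x : EuclideanSpace ℝ (Fin 2), x ≠ 0 → τ x ≤ τ (-x) := by
    intro x hx
    have hnx : (0:ℝ) < ‖x‖ := norm_pos_iff.mpr hx
    have hn : x ≠ 0 := hx
    have h1 := hunit x hx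
    have h2 : ‖‖x‖⁻¹ • (-x)‖ = 1 := by
      rw [smul_neg, norm_neg]; exact h1
    have key := hpyr (‖x‖⁻¹ • x) (‖x‖⁻¹ • (-x)) (‖x‖⁻¹ • (-x)) h1 h2 h2
      ‖x‖ ‖x‖ 0 (norm_nonneg x) (norm_nonneg x) le_rfl ?_
    · have e1 : τ x = ‖x‖ * τ (‖x‖⁻¹ • x) := hscale x hx
      have e2 : τ (-x) = ‖x‖ * τ (‖x‖⁻¹ • (-x)) := by
        have := hscale (-x) (neg_ne_zero.mpr hx)
        rwa [norm_neg] at this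
      rw [zero_mul, add_zero] at key
      have : ‖x‖ * τ (‖x‖⁻¹ • x) ≤ ‖x‖ * τ (‖x‖⁻¹ • (-x)) := key
      linarith [e1, e2]
    · rw [smul_smul, smul_smul, mul_inv_cancel₀ hnx.ne', one_smul]
      simp
  have heven : ∀ x : EuclideanSpace ℝ (Fin 2), τ (-x) = τ x := by
    intro x
    by_cases hx : x = 0
    · simp [hx]
    · have h1 := heven_le x hx
      have h2 := heven_le (-x) (neg_ne_zero.mpr hx)
      rw [neg_neg] at h2
      linarith
  -- τ is nonnegative
  have hnonneg : ∀ x : EuclideanSpace ℝ (Fin 2), 0 ≤ τ x := by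
    intro x
    by_cases hx : x = 0
    · simp [hx, hτ0]
    · have hnx : (0:ℝ) < ‖x‖ := norm_pos_iff.mpr hx
      have h1 := hunit x hx
      have h2 : ‖‖x‖⁻¹ • (-x)‖ = 1 := by rw [smul_neg, norm_neg]; exact h1
      have key := hpyr (‖x‖⁻¹ • x) (‖x‖⁻¹ • x) (‖x‖⁻¹ • (-x)) h1 h1 h2
        0 ‖x‖ ‖x‖ le_rfl (norm_nonneg x) (norm_nonneg x) ?_
      · rw [zero_mul] at key
        have e1 : τ x = ‖x‖ * τ (‖x‖⁻¹ • x) := hscale x hx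
        have e2 : τ (-x) = ‖x‖ * τ (‖x‖⁻¹ • (-x)) := by
          have := hscale (-x) (neg_ne_zero.mpr hx)
          rwa [norm_neg] at this
        have heq : τ (-x) = τ x := heven x
        nlinarith
      · simp [smul_smul, mul_inv_cancel₀ hnx.ne']
  -- subadditivity
  have hsub : ∀ u v : EuclideanSpace ℝ (Fin 2), τ (u + v) ≤ τ u + τ v := by
    intro u v
    by_cases hu : u = 0
    · simp [hu, hτ0]
    by_cases hv : v = 0
    · simp [hv, hτ0]
    by_cases hw : u + v = 0
    · rw [hw, hτ0]
      exact add_nonneg (hnonneg u) (hnonneg v)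
    · have h0 := hunit (u + v) hw
      have h1 : ‖‖u‖⁻¹ • (-u)‖ = 1 := by
        rw [smul_neg, norm_neg]; exact hunit u hu
      have h2 : ‖‖v‖⁻¹ • (-v)‖ = 1 := by
        rw [smul_neg, norm_neg]; exact hunit v hv
      have key := hpyr (‖u + v‖⁻¹ • (u + v)) (‖u‖⁻¹ • (-u)) (‖v‖⁻¹ • (-v)) h0 h1 h2
        ‖u + v‖ ‖u‖ ‖v‖ (norm_nonneg _) (norm_nonneg _) (norm_nonneg _) ?_
      · have e0 : τ (u + v) = ‖u + v‖ * τ (‖u + v‖⁻¹ • (u + v)) := hscale _ hw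
        have e1 : τ u = ‖u‖ * τ (‖u‖⁻¹ • (-u)) := by
          have := hscale (-u) (neg_ne_zero.mpr hu)
          rw [norm_neg] at this
          rw [← heven u]; exact this
        have e2 : τ v = ‖v‖ * τ (‖v‖⁻¹ • (-v)) := by
          have := hscale (-v) (neg_ne_zero.mpr hv)
          rw [norm_neg] at this
          rw [← heven v]; exact this
        linarith [key]
      · rw [smul_smul, smul_smul, smul_smul,
          mul_inv_cancel₀ (norm_ne_zero_iff.mpr hw),
          mul_inv_cancel₀ (norm_ne_zero_iff.mpr hu),
          mul_inv_cancel₀ (norm_ne_zero_iff.mpr hv), one_smul, one_smul, one_smul]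
        abel
  refine ⟨hsub, convex_univ, ?_⟩
  intro x _ y _ a b ha hb _
  calc τ (a • x + b • y) ≤ τ (a • x) + τ (b • y) := hsub _ _
    _ = a * τ x + b * τ y := by rw [hhom a ha x, hhom b hb y]
    _ = a • τ x + b • τ y := by simp [smul_eq_mul]
end

section
/- Let τ : ℝ^2 → ℝ be 1-homogeneous, positive on nonzero vectors, continuous, and suppose it satisfies the strong triangle inequality: there exists c > 0 such that for all u, v ∈ ℝ^2, τ(u) + τ(v) − τ(u + v) ≥ c (‖u‖ + ‖v‖ − ‖u + v‖). Then τ is convex and, moreover, for any u, v not positively proportional, τ(u) + τ(v) > τ(u + v). -/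
/-- The strong triangle inequality implies convexity and strict subadditivity for vectors
that are not positively proportional. -/
theorem strong_triangle_implies_strict_convexity
    (τ : EuclideanSpace ℝ (Fin 2) → ℝ)
    (hhom : ∀ (s : ℝ), 0 ≤ s → ∀ x, τ (s • x) = s * τ x)
    (hpos : ∀ x : EuclideanSpace ℝ (Fin 2), x ≠ 0 → 0 < τ x)
    (hcont : Continuous τ)
    (c : ℝ) (hc : 0 < c)
    (hstrong : ∀ u v : EuclideanSpace ℝ (Fin 2),
      τ u + τ v - τ (u + v) ≥ c * (‖u‖ + ‖v‖ - ‖u + v‖)) :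
    ConvexOn ℝ Set.univ τ ∧
    ∀ u v : EuclideanSpace ℝ (Fin 2),
      ¬ (u = 0 ∨ ∃ s : ℝ, 0 ≤ s ∧ v = s • u) →
      τ u + τ v > τ (u + v) := by
  have hsub : ∀ u v : EuclideanSpace ℝ (Fin 2), τ (u + v) ≤ τ u + τ v := by
    intro u v
    have h1 := hstrong u v
    have h2 : (0:ℝ) ≤ c * (‖u‖ + ‖v‖ - ‖u + v‖) := by
      apply mul_nonneg hc.le
      linarith [norm_add_le u v]
    linarith
  constructor
  · refine ⟨convex_univ, fun x _ y _ a b ha hb hab => ?_⟩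
    calc τ (a • x + b • y) ≤ τ (a • x) + τ (b • y) := hsub _ _
      _ = a * τ x + b * τ y := by rw [hhom a ha, hhom b hb]
      _ = a • τ x + b • τ y := rfl
  · intro u v h
    push_neg at h
    obtain ⟨hu, hv⟩ := h
    have hray : ¬ SameRay ℝ u v := by
      intro hr
      obtain ⟨s, hs, hsv⟩ := hr.exists_nonneg_left hu
      exact hv s hs hsv.symm
    have hlt : ‖u + v‖ < ‖u‖ + ‖v‖ := not_sameRay_iff_norm_add_lt.mp hray
    have := hstrong u v
    have : (0:ℝ) < c * (‖u‖ + ‖v‖ - ‖u + v‖) := mul_pos hc (by linarith)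
    linarith [hstrong u v]
end

section
/- Let W : C → ℝ be defined on compact convex subsets C of ℝ^d by the anisotropic perimeter W(C) = lim_{ε→0} (vol(C + εK) − vol(C))/ε, where K is a fixed compact convex body with nonempty interior. Then for every compact convex set V with vol(V) = vol(K), one has W(V) ≥ d · vol(K), with equality when V = K. -/
/-!
Lebesgue measure is log-concave: `vol ((1 - t) • A + t • B) ≥ vol A ^ (1 - t) * vol B ^ t`, the
multiplicative Brunn–Minkowski inequality. Writing `V + ε • K = (1 + ε) • ((1 - t) • V + t • K)`
with `t = ε / (1 + ε)`, this gives `vol (V + ε • K) ≥ (1 + ε) ^ d * vol K` when `vol V = vol K`,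
with equality for `V = K` since `K + ε • K = (1 + ε) • K` for convex `K`. The difference quotients
for `V` therefore dominate those for `K`, which tend to `d * vol K`.

Log-concavity is proved by induction on the dimension: Fubini reduces it to the one-dimensional
Prékopa–Leindler inequality for the slice volumes, which follows from the one-dimensional
Brunn–Minkowski inequality `|A + B| ≥ |A| + |B|` applied to superlevel sets, after rescaling
the two functions to a common supremum.
-/

open MeasureTheory Set Pointwise Filter Topology
open scoped ENNReal

theorem Real.volume_setOf_pos_ofReal_lt (a : ℝ≥0∞) :
    volume {r : ℝ | 0 < r ∧ ENNReal.ofReal r < a} = a := by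
  rcases eq_or_ne a ∞ with rfl | ha
  · have : {r : ℝ | 0 < r ∧ ENNReal.ofReal r < ∞} = Ioi 0 := by ext; simp
    rw [this, Real.volume_Ioi]
  · have : {r : ℝ | 0 < r ∧ ENNReal.ofReal r < a} = Ioo 0 a.toReal := by
      ext r
      exact and_congr_right fun hr => ENNReal.ofReal_lt_iff_lt_toReal hr.le ha
    rw [this, Real.volume_Ioo, sub_zero, ENNReal.ofReal_toReal ha]

theorem lintegral_eq_lintegral_meas_ofReal_lt {α : Type*} [MeasurableSpace α] (μ : Measure α)
    [SFinite μ] {f : α → ℝ≥0∞} (hf : Measurable f) :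
    ∫⁻ x, f x ∂μ = ∫⁻ r in Ioi 0, μ {x | ENNReal.ofReal r < f x} := by
  set S := {p : α × ℝ | 0 < p.2 ∧ ENNReal.ofReal p.2 < f p.1}
  have hS : MeasurableSet S := (measurableSet_Ioi.preimage measurable_snd).inter
    (measurableSet_lt (ENNReal.measurable_ofReal.comp measurable_snd) (hf.comp measurable_fst))
  calc ∫⁻ x, f x ∂μ = μ.prod volume S := by
        simp only [Measure.prod_apply hS]
        exact lintegral_congr fun x => (Real.volume_setOf_pos_ofReal_lt (f x)).symm
    _ = ∫⁻ r, μ ((·, r) ⁻¹' S) := Measure.prod_apply_symm hS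
    _ = ∫⁻ r in Ioi 0, μ {x | ENNReal.ofReal r < f x} := by
        rw [← lintegral_indicator measurableSet_Ioi]
        congr with r
        by_cases hr : 0 < r <;> simp [S, hr, indicator]

theorem Real.volume_add_volume_le_volume_add_of_isCompact {A B : Set ℝ} (hA : IsCompact A)
    (hB : IsCompact B) (hA₀ : A.Nonempty) (hB₀ : B.Nonempty) :
    volume A + volume B ≤ volume (A + B) := by
  set a := sSup A
  set b := sInf B
  have ha : a ∈ A := hA.sSup_mem hA₀
  have hb : b ∈ B := hB.sInf_mem hB₀
  -- `b +ᵥ A` and `a +ᵥ B` lie in `A + B` and meet only at `a + b`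
  have hinter : (b +ᵥ A) ∩ (a +ᵥ B) ⊆ {a + b} := by
    rintro _ ⟨⟨x, hx, rfl⟩, ⟨y, hy, hxy⟩⟩
    have : b + x ≤ a + b := by linarith [le_csSup hA.bddAbove hx]
    have : a + b ≤ a + y := by linarith [csInf_le hB.bddBelow hy]
    simp only [vadd_eq_add] at hxy ⊢
    exact mem_singleton_iff.2 (by linarith)
  have hunion : (b +ᵥ A) ∪ (a +ᵥ B) ⊆ A + B := by
    rintro _ (⟨x, hx, rfl⟩ | ⟨y, hy, rfl⟩)
    · simpa only [vadd_eq_add, add_comm b] using add_mem_add hx hb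
    · exact add_mem_add ha hy
  calc volume A + volume B = volume (b +ᵥ A) + volume (a +ᵥ B) := by rw [measure_vadd, measure_vadd]
    _ = volume ((b +ᵥ A) ∪ (a +ᵥ B)) + volume ((b +ᵥ A) ∩ (a +ᵥ B)) :=
        (measure_union_add_inter _ (hB.vadd a).measurableSet).symm
    _ ≤ volume (A + B) + 0 := by
        gcongr
        exact (measure_mono hinter).trans (measure_singleton _).le
    _ = volume (A + B) := add_zero _

theorem Real.volume_add_volume_le_volume_add {A B : Set ℝ} (hA : MeasurableSet A)
    (hB : MeasurableSet B) (hA₀ : A.Nonempty) (hB₀ : B.Nonempty) :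
    volume A + volume B ≤ volume (A + B) := by
  obtain ⟨p, hp⟩ := hA₀
  obtain ⟨q, hq⟩ := hB₀
  rw [hA.measure_eq_iSup_isCompact, hB.measure_eq_iSup_isCompact]
  simp_rw [iSup_and']
  refine ENNReal.biSup_add_biSup_le' ⟨∅, empty_subset _, isCompact_empty⟩
    ⟨∅, empty_subset _, isCompact_empty⟩ fun KA hKA KB hKB => ?_
  -- adjoining a point of `A` and of `B` makes the compact pieces nonempty
  calc volume KA + volume KB ≤ volume (insert p KA) + volume (insert q KB) := by
        gcongr <;> exact subset_insert _ _
    _ ≤ volume (insert p KA + insert q KB) :=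
        volume_add_volume_le_volume_add_of_isCompact (hKA.2.insert p) (hKB.2.insert q)
          (insert_nonempty _ _) (insert_nonempty _ _)
    _ ≤ volume (A + B) := measure_mono (add_subset_add (insert_subset hp hKA.1)
        (insert_subset hq hKB.1))

theorem ENNReal.rpow_mul_rpow_le_add {t : ℝ} (ht₀ : 0 < t) (ht₁ : t < 1) (a b : ℝ≥0∞) :
    a ^ (1 - t) * b ^ t ≤ ENNReal.ofReal (1 - t) * a + ENNReal.ofReal t * b := by
  have h₁ : 0 < 1 - t := sub_pos.2 ht₁
  have key := ENNReal.young_inequality (a ^ (1 - t)) (b ^ t)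
    (Real.HolderConjugate.one_sub_inv_inv ht₀ ht₁)
  rwa [← ENNReal.rpow_mul, ← ENNReal.rpow_mul, mul_inv_cancel₀ h₁.ne', mul_inv_cancel₀ ht₀.ne',
    ENNReal.rpow_one, ENNReal.rpow_one, ENNReal.ofReal_inv_of_pos h₁, ENNReal.ofReal_inv_of_pos ht₀,
    div_eq_mul_inv, inv_inv, div_eq_mul_inv, inv_inv, mul_comm a, mul_comm b] at key

section PrekopaLeindler

variable {t : ℝ} {F G H : ℝ → ℝ≥0∞}

theorem volume_superlevel_add_le (ht₀ : 0 < t) (ht₁ : t < 1) (hF : Measurable F)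
    (hG : Measurable G) (hFG : ⨆ x, F x = ⨆ y, G y)
    (hFGH : ∀ x y, F x ^ (1 - t) * G y ^ t ≤ H ((1 - t) * x + t * y)) {r : ℝ≥0∞}
    (hr₀ : r ≠ 0) (hr : r ≠ ∞) :
    ENNReal.ofReal (1 - t) * volume {x | r < F x} + ENNReal.ofReal t * volume {y | r < G y} ≤
      volume {z | r < H z} := by
  have h₁ : 0 < 1 - t := sub_pos.2 ht₁
  have hne : {x | r < F x}.Nonempty ↔ {y | r < G y}.Nonempty := by
    change (∃ x, r < F x) ↔ ∃ y, r < G y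
    rw [← lt_iSup_iff, ← lt_iSup_iff, hFG]
  rcases {x | r < F x}.eq_empty_or_nonempty with hFr | hFr
  · rw [hFr, not_nonempty_iff_eq_empty.1 (hne.not.1 (not_nonempty_iff_eq_empty.2 hFr))]
    simp
  have hsub : (1 - t) • {x | r < F x} + t • {y | r < G y} ⊆ {z | r < H z} := by
    rintro _ ⟨_, ⟨x, hx, rfl⟩, _, ⟨y, hy, rfl⟩, rfl⟩
    calc r = r ^ (1 - t) * r ^ t := by
          rw [← ENNReal.rpow_add _ _ hr₀ hr, sub_add_cancel, ENNReal.rpow_one]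
      _ < F x ^ (1 - t) * G y ^ t :=
          ENNReal.mul_lt_mul (ENNReal.rpow_lt_rpow hx h₁) (ENNReal.rpow_lt_rpow hy ht₀)
      _ ≤ H ((1 - t) * x + t * y) := hFGH x y
  calc ENNReal.ofReal (1 - t) * volume {x | r < F x} + ENNReal.ofReal t * volume {y | r < G y}
      = volume ((1 - t) • {x | r < F x}) + volume (t • {y | r < G y}) := by
        simp only [Measure.addHaar_smul_of_nonneg _ h₁.le, Measure.addHaar_smul_of_nonneg _ ht₀.le,
          Module.finrank_self, pow_one]
    _ ≤ volume ((1 - t) • {x | r < F x} + t • {y | r < G y}) :=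
        Real.volume_add_volume_le_volume_add
          ((measurableSet_lt measurable_const hF).const_smul₀ _)
          ((measurableSet_lt measurable_const hG).const_smul₀ _)
          (hFr.smul_set) ((hne.1 hFr).smul_set)
    _ ≤ volume {z | r < H z} := measure_mono hsub

theorem add_lintegral_le_of_iSup_eq (ht₀ : 0 < t) (ht₁ : t < 1) (hF : Measurable F)
    (hG : Measurable G) (hH : Measurable H) (hFG : ⨆ x, F x = ⨆ y, G y)
    (hFGH : ∀ x y, F x ^ (1 - t) * G y ^ t ≤ H ((1 - t) * x + t * y)) :
    ENNReal.ofReal (1 - t) * (∫⁻ x, F x) + ENNReal.ofReal t * (∫⁻ y, G y) ≤ ∫⁻ z, H z := by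
  rw [lintegral_eq_lintegral_meas_ofReal_lt volume hF,
    lintegral_eq_lintegral_meas_ofReal_lt volume hG,
    lintegral_eq_lintegral_meas_ofReal_lt volume hH,
    ← lintegral_const_mul' _ _ ENNReal.ofReal_ne_top,
    ← lintegral_const_mul' _ _ ENNReal.ofReal_ne_top]
  refine (le_lintegral_add _ _).trans
    (setLIntegral_mono' measurableSet_Ioi fun r (hr : 0 < r) => ?_)
  exact volume_superlevel_add_le ht₀ ht₁ hF hG hFG hFGH (ENNReal.ofReal_pos.2 hr).ne'
    ENNReal.ofReal_ne_top

theorem ENNReal.mul_rpow_mul_mul_rpow {t : ℝ} (ht₀ : 0 ≤ t) (ht₁ : t ≤ 1) {α β : ℝ≥0∞}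
    (hαβ : α ^ (1 - t) * β ^ t = 1) (a b : ℝ≥0∞) :
    (α * a) ^ (1 - t) * (β * b) ^ t = a ^ (1 - t) * b ^ t := by
  rw [ENNReal.mul_rpow_of_nonneg _ _ (sub_nonneg.2 ht₁), ENNReal.mul_rpow_of_nonneg _ _ ht₀,
    mul_mul_mul_comm, hαβ, one_mul]

theorem lintegral_rpow_mul_lintegral_rpow_le (ht₀ : 0 < t) (ht₁ : t < 1) (hF : Measurable F)
    (hG : Measurable G) (hH : Measurable H) (hFb : ⨆ x, F x ≠ ∞) (hGb : ⨆ y, G y ≠ ∞)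
    (hFGH : ∀ x y, F x ^ (1 - t) * G y ^ t ≤ H ((1 - t) * x + t * y)) :
    (∫⁻ x, F x) ^ (1 - t) * (∫⁻ y, G y) ^ t ≤ ∫⁻ z, H z := by
  have h₁ : 0 < 1 - t := sub_pos.2 ht₁
  set a := ⨆ x, F x
  set b := ⨆ y, G y
  rcases eq_or_ne a 0 with ha | ha
  · simp [ENNReal.iSup_eq_zero.1 ha, ENNReal.zero_rpow_of_pos h₁]
  rcases eq_or_ne b 0 with hb | hb
  · simp [ENNReal.iSup_eq_zero.1 hb, ENNReal.zero_rpow_of_pos ht₀]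
  -- rescaling `F` and `G` to the common supremum `c` leaves `F x ^ (1 - t) * G y ^ t` unchanged
  set c := a ^ (1 - t) * b ^ t
  have haf : a ^ (1 - t) ≠ ∞ := ENNReal.rpow_ne_top_of_nonneg h₁.le hFb
  have hbf : b ^ t ≠ ∞ := ENNReal.rpow_ne_top_of_nonneg ht₀.le hGb
  have hc₀ : c ≠ 0 := mul_ne_zero (ENNReal.rpow_pos (pos_iff_ne_zero.2 ha) hFb).ne'
    (ENNReal.rpow_pos (pos_iff_ne_zero.2 hb) hGb).ne'
  have hc : c ≠ ∞ := ENNReal.mul_ne_top haf hbf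
  have hαβ : (c / a) ^ (1 - t) * (c / b) ^ t = 1 := by
    rw [ENNReal.div_rpow_of_nonneg _ _ h₁.le, ENNReal.div_rpow_of_nonneg _ _ ht₀.le,
      ← ENNReal.mul_div_mul_comm (Or.inr hbf) (Or.inl haf),
      ← ENNReal.rpow_add_of_nonneg _ _ h₁.le ht₀.le, sub_add_cancel,
      ENNReal.rpow_one, ENNReal.div_self hc₀ hc]
  have hsup : ⨆ x, c / a * F x = ⨆ y, c / b * G y := by
    rw [← ENNReal.mul_iSup, ← ENNReal.mul_iSup, ENNReal.div_mul_cancel ha hFb,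
      ENNReal.div_mul_cancel hb hGb]
  have key := add_lintegral_le_of_iSup_eq ht₀ ht₁ (hF.const_mul _) (hG.const_mul _) hH hsup
    fun x y => (ENNReal.mul_rpow_mul_mul_rpow ht₀.le ht₁.le hαβ _ _).trans_le (hFGH x y)
  rw [lintegral_const_mul _ hF, lintegral_const_mul _ hG] at key
  calc (∫⁻ x, F x) ^ (1 - t) * (∫⁻ y, G y) ^ t
      = (c / a * ∫⁻ x, F x) ^ (1 - t) * (c / b * ∫⁻ y, G y) ^ t :=
        (ENNReal.mul_rpow_mul_mul_rpow ht₀.le ht₁.le hαβ _ _).symm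
    _ ≤ _ := ENNReal.rpow_mul_rpow_le_add ht₀ ht₁ _ _
    _ ≤ ∫⁻ z, H z := key

end PrekopaLeindler

def IsLogConcaveOnCompacts {E : Type*} [AddCommGroup E] [Module ℝ E] [TopologicalSpace E]
    [MeasurableSpace E] (μ : Measure E) : Prop :=
  ∀ ⦃A B : Set E⦄, IsCompact A → IsCompact B → ∀ ⦃t : ℝ⦄, 0 < t → t < 1 →
    μ A ^ (1 - t) * μ B ^ t ≤ μ ((1 - t) • A + t • B)

theorem Set.preimage_prodMk_subset_image_snd {X Y : Type*} (C : Set (X × Y)) (x : X) :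
    Prod.mk x ⁻¹' C ⊆ Prod.snd '' C :=
  fun y hy => ⟨(x, y), hy, rfl⟩

theorem IsCompact.preimage_prodMk {X Y : Type*} [TopologicalSpace X] [T2Space X]
    [TopologicalSpace Y] [T2Space Y] {C : Set (X × Y)} (hC : IsCompact C) (x : X) :
    IsCompact (Prod.mk x ⁻¹' C) :=
  (hC.image continuous_snd).of_isClosed_subset (hC.isClosed.preimage (Continuous.prodMk_right x))
    (preimage_prodMk_subset_image_snd C x)

theorem Set.smul_add_smul_preimage_prodMk_subset {E : Type*} [AddCommGroup E] [Module ℝ E]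
    (A B : Set (ℝ × E)) (t σ τ : ℝ) :
    (1 - t) • (Prod.mk σ ⁻¹' A) + t • (Prod.mk τ ⁻¹' B) ⊆
      Prod.mk ((1 - t) * σ + t * τ) ⁻¹' ((1 - t) • A + t • B) := by
  rintro _ ⟨_, ⟨x, hx, rfl⟩, _, ⟨y, hy, rfl⟩, rfl⟩
  show (1 - t) • (σ, x) + t • (τ, y) ∈ (1 - t) • A + t • B
  exact add_mem_add (smul_mem_smul_set hx) (smul_mem_smul_set hy)

namespace IsLogConcaveOnCompacts

variable {E : Type*} [NormedAddCommGroup E] [NormedSpace ℝ E] [MeasurableSpace E]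

theorem of_subsingleton [Subsingleton E] (μ : Measure E) : IsLogConcaveOnCompacts μ := by
  intro A B _ _ t ht₀ ht₁
  rcases A.eq_empty_or_nonempty with rfl | hA
  · simp [ENNReal.zero_rpow_of_pos (sub_pos.2 ht₁)]
  rcases B.eq_empty_or_nonempty with rfl | hB
  · simp [ENNReal.zero_rpow_of_pos ht₀]
  rw [Subsingleton.eq_univ_of_nonempty (hA.smul_set.add hB.smul_set),
    Subsingleton.eq_univ_of_nonempty hA, Subsingleton.eq_univ_of_nonempty hB,
    ← ENNReal.rpow_add_of_nonneg _ _ (sub_pos.2 ht₁).le ht₀.le, sub_add_cancel, ENNReal.rpow_one]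

theorem comap {F : Type*} [NormedAddCommGroup F] [NormedSpace ℝ F] [MeasurableSpace F]
    [BorelSpace F] {ν : Measure F} (hν : IsLogConcaveOnCompacts ν) {μ : Measure E} (g : E →ₗ[ℝ] F)
    (hg : Continuous g) (hg_inj : Function.Injective g) (hgμ : MeasurePreserving g μ ν) :
    IsLogConcaveOnCompacts μ := by
  intro A B hA hB t ht₀ ht₁
  have hμ : ∀ S : Set E, IsCompact S → μ S = ν (g '' S) := fun S hS => by
    rw [← hgμ.measure_preimage (hS.image hg).measurableSet.nullMeasurableSet,
      hg_inj.preimage_image]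
  rw [hμ A hA, hμ B hB, hμ _ ((hA.smul _).add (hB.smul _)), image_add, image_smul_set,
    image_smul_set]
  exact hν (hA.image hg) (hB.image hg) ht₀ ht₁

theorem volume_prod [BorelSpace E] [SecondCountableTopology E] {μ : Measure E} [SFinite μ]
    [IsFiniteMeasureOnCompacts μ] (hμ : IsLogConcaveOnCompacts μ) :
    IsLogConcaveOnCompacts ((volume : Measure ℝ).prod μ) := by
  intro A B hA hB t ht₀ ht₁
  have hS := (hA.smul (1 - t)).add (hB.smul t)
  have hbdd : ∀ C : Set (ℝ × E), IsCompact C → ⨆ σ, μ (Prod.mk σ ⁻¹' C) ≠ ∞ := fun C hC =>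
    ((iSup_le fun σ => measure_mono (preimage_prodMk_subset_image_snd C σ)).trans_lt
      (hC.image continuous_snd).measure_lt_top).ne
  rw [Measure.prod_apply hA.measurableSet, Measure.prod_apply hB.measurableSet,
    Measure.prod_apply hS.measurableSet]
  exact lintegral_rpow_mul_lintegral_rpow_le ht₀ ht₁
    (measurable_measure_prodMk_left hA.measurableSet)
    (measurable_measure_prodMk_left hB.measurableSet)
    (measurable_measure_prodMk_left hS.measurableSet) (hbdd A hA) (hbdd B hB) fun σ τ =>
    (hμ (hA.preimage_prodMk σ) (hB.preimage_prodMk τ) ht₀ ht₁).trans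
      (measure_mono (smul_add_smul_preimage_prodMk_subset A B t σ τ))

end IsLogConcaveOnCompacts

theorem isLogConcaveOnCompacts_volume_pi (n : ℕ) :
    IsLogConcaveOnCompacts (volume : Measure (Fin n → ℝ)) := by
  induction n with
  | zero => exact .of_subsingleton _
  | succ n ih =>
    let g : (Fin (n + 1) → ℝ) →ₗ[ℝ] ℝ × (Fin n → ℝ) :=
      { toFun := MeasurableEquiv.piFinSuccAbove (fun _ => ℝ) 0
        map_add' := fun _ _ => rfl
        map_smul' := fun _ _ => rfl }
    exact ih.volume_prod.comap g g.continuous_of_finiteDimensional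
      (MeasurableEquiv.injective _) (volume_preserving_piFinSuccAbove _ 0)

theorem isLogConcaveOnCompacts_volume_euclideanSpace (n : ℕ) :
    IsLogConcaveOnCompacts (volume : Measure (EuclideanSpace ℝ (Fin n))) :=
  (isLogConcaveOnCompacts_volume_pi n).comap (WithLp.linearEquiv 2 ℝ (Fin n → ℝ)).toLinearMap
    (LinearMap.continuous_of_finiteDimensional _) (WithLp.ofLp_injective 2)
    (PiLp.volume_preserving_ofLp _)

theorem IsLogConcaveOnCompacts.ofReal_one_add_pow_mul_le_measure_add_smul {E : Type*}
    [NormedAddCommGroup E] [NormedSpace ℝ E] [MeasurableSpace E] [BorelSpace E]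
    [FiniteDimensional ℝ E] {μ : Measure E} [μ.IsAddHaarMeasure] (hμ : IsLogConcaveOnCompacts μ)
    {V K : Set E} (hV : IsCompact V) (hK : IsCompact K) (hVK : μ V = μ K) {ε : ℝ} (hε : 0 < ε) :
    ENNReal.ofReal ((1 + ε) ^ Module.finrank ℝ E) * μ K ≤ μ (V + ε • K) := by
  set t := ε / (1 + ε) with ht
  have ht₀ : 0 < t := by positivity
  have ht₁ : t < 1 := (div_lt_one (by positivity)).2 (lt_one_add ε)
  have hdecomp : V + ε • K = (1 + ε) • ((1 - t) • V + t • K) := by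
    rw [smul_add, smul_smul, smul_smul, show (1 + ε) * (1 - t) = 1 by rw [ht]; field_simp; ring,
      show (1 + ε) * t = ε by rw [ht]; field_simp, one_smul]
  rw [hdecomp, Measure.addHaar_smul_of_nonneg _ (by positivity)]
  gcongr ENNReal.ofReal _ * ?_
  calc μ K = μ V ^ (1 - t) * μ K ^ t := by
        rw [hVK, ← ENNReal.rpow_add_of_nonneg _ _ (sub_pos.2 ht₁).le ht₀.le, sub_add_cancel,
          ENNReal.rpow_one]
    _ ≤ μ ((1 - t) • V + t • K) := hμ hV hK ht₀ ht₁

theorem Convex.addHaar_add_smul_self {E : Type*} [NormedAddCommGroup E] [NormedSpace ℝ E]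
    [MeasurableSpace E] [BorelSpace E] [FiniteDimensional ℝ E] (μ : Measure E)
    [μ.IsAddHaarMeasure] {K : Set E} (hK : Convex ℝ K) {ε : ℝ} (hε : 0 ≤ ε) :
    μ (K + ε • K) = ENNReal.ofReal ((1 + ε) ^ Module.finrank ℝ E) * μ K := by
  rw [← Measure.addHaar_smul_of_nonneg _ (by positivity), hK.add_smul zero_le_one hε, one_smul]

theorem tendsto_one_add_pow_sub_one_div (d : ℕ) :
    Tendsto (fun ε : ℝ => ((1 + ε) ^ d - 1) / ε) (𝓝[>] 0) (𝓝 d) := by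
  have h := hasDerivAt_iff_tendsto_slope.1 (((hasDerivAt_id (0 : ℝ)).const_add 1).pow d)
  simp only [add_zero, one_pow, mul_one, id] at h
  refine (h.mono_left (nhdsWithin_mono _ fun ε (hε : 0 < ε) => hε.ne')).congr fun ε => ?_
  simp [slope_def_field]

theorem wulff_minimizes_anisotropic_perimeter_general (d : ℕ)
    (K : Set (EuclideanSpace ℝ (Fin d)))
    (hKc : IsCompact K) (hKconv : Convex ℝ K)
    (W : Set (EuclideanSpace ℝ (Fin d)) → ℝ)
    (hW : ∀ C : Set (EuclideanSpace ℝ (Fin d)), IsCompact C → Convex ℝ C →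
      Filter.Tendsto
        (fun ε : ℝ => ((volume (C + ε • K)).toReal - (volume C).toReal) / ε)
        (nhdsWithin 0 (Set.Ioi 0)) (nhds (W C)))
    (V : Set (EuclideanSpace ℝ (Fin d))) (hVc : IsCompact V) (hVconv : Convex ℝ V)
    (hvol : volume V = volume K) :
    W V ≥ d * (volume K).toReal ∧ W K = d * (volume K).toReal := by
  set v := (volume K).toReal
  have hlim : Tendsto (fun ε : ℝ => ((1 + ε) ^ d - 1) / ε * v) (𝓝[>] 0) (𝓝 (d * v)) :=
    (tendsto_one_add_pow_sub_one_div d).mul_const v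
  have hV : ∀ ε > 0, (1 + ε) ^ d * v ≤ (volume (V + ε • K)).toReal := fun ε hε => by
    have h := ENNReal.toReal_mono (hVc.add (hKc.smul ε)).measure_lt_top.ne
      ((isLogConcaveOnCompacts_volume_euclideanSpace d).ofReal_one_add_pow_mul_le_measure_add_smul
        hVc hKc hvol hε)
    rwa [finrank_euclideanSpace_fin, ENNReal.toReal_mul,
      ENNReal.toReal_ofReal (by positivity)] at h
  have hK : ∀ ε > 0, (volume (K + ε • K)).toReal = (1 + ε) ^ d * v := fun ε hε => by
    rw [hKconv.addHaar_add_smul_self volume hε.le, finrank_euclideanSpace_fin,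
      ENNReal.toReal_mul, ENNReal.toReal_ofReal (by positivity)]
  refine ⟨le_of_tendsto_of_tendsto hlim (hW V hVc hVconv) ?_,
    tendsto_nhds_unique (hW K hKc hKconv) (hlim.congr' ?_)⟩ <;>
    filter_upwards [self_mem_nhdsWithin] with ε (hε : 0 < ε)
  · rw [hvol, div_mul_eq_mul_div, sub_mul, one_mul]
    gcongr
    exact hV ε hε
  · rw [hK ε hε, div_mul_eq_mul_div, sub_mul, one_mul]

/-- The Wulff shape minimizes the anisotropic perimeter among compact convex sets of
the same volume. -/
theorem wulff_minimizes_anisotropic_perimeter (d : ℕ) (hd : 1 ≤ d)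
    (K : Set (EuclideanSpace ℝ (Fin d)))
    (hKc : IsCompact K) (hKconv : Convex ℝ K) (hKint : (interior K).Nonempty)
    (W : Set (EuclideanSpace ℝ (Fin d)) → ℝ)
    (hW : ∀ C : Set (EuclideanSpace ℝ (Fin d)), IsCompact C → Convex ℝ C →
      Filter.Tendsto
        (fun ε : ℝ => ((volume (C + ε • K)).toReal - (volume C).toReal) / ε)
        (nhdsWithin 0 (Set.Ioi 0)) (nhds (W C)))
    (V : Set (EuclideanSpace ℝ (Fin d))) (hVc : IsCompact V) (hVconv : Convex ℝ V)
    (hvol : volume V = volume K) :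
    W V ≥ d * (volume K).toReal ∧ W K = d * (volume K).toReal :=
  wulff_minimizes_anisotropic_perimeter_general d K hKc hKconv W hW V hVc hVconv hvol
end

section
/- Let μ be a finite ferromagnetic Ising Gibbs measure: on Ω = {−1,1}^Λ with Λ finite, μ(σ) ∝ exp(β Σ_i h_i σ_i + β Σ_{{i,j}} J_{ij} σ_i σ_j) with J_{ij} ≥ 0, β ≥ 0, arbitrary h ∈ ℝ^Λ. Then for any two increasing functions f, g : Ω → ℝ, ⟨fg⟩_μ ≥ ⟨f⟩_μ ⟨g⟩_μ (FKG inequality). -/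
/-- The spin value `±1` associated to a Boolean. -/
noncomputable def spin (b : Bool) : ℝ := if b then 1 else -1

lemma spin_inf_add_spin_sup (a c : Bool) :
    spin (a ⊓ c) + spin (a ⊔ c) = spin a + spin c := by
  cases a <;> cases c <;> simp [spin]

lemma spin_supermodular (a b c d : Bool) :
    spin a * spin b + spin c * spin d ≤
      spin (a ⊓ c) * spin (b ⊓ d) + spin (a ⊔ c) * spin (b ⊔ d) := by
  cases a <;> cases b <;> cases c <;> cases d <;> norm_num [spin]

/-- FKG inequality for finite ferromagnetic Ising Gibbs measures with arbitrary
magnetic fields: increasing functions are positively correlated. -/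
theorem ising_fkg (Λ : Type*) [Fintype Λ] [DecidableEq Λ]
    (β : ℝ) (hβ : 0 ≤ β) (h : Λ → ℝ) (J : Λ → Λ → ℝ)
    (hJ : ∀ i j, 0 ≤ J i j) (hJsymm : ∀ i j, J i j = J j i)
    (w : (Λ → Bool) → ℝ)
    (hw : ∀ σ : Λ → Bool, w σ =
      Real.exp (β * ((∑ i, h i * spin (σ i)) +
        (1 / 2) * ∑ i, ∑ j, J i j * spin (σ i) * spin (σ j))))
    (f g : (Λ → Bool) → ℝ) (hf : Monotone f) (hg : Monotone g) :
    (∑ σ : Λ → Bool, w σ * f σ * g σ) * (∑ σ : Λ → Bool, w σ)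
      ≥ (∑ σ : Λ → Bool, w σ * f σ) * (∑ σ : Λ → Bool, w σ * g σ) := by
  classical
  have hw0 : 0 ≤ w := fun σ => by rw [hw σ]; positivity
  -- FKG lattice condition
  have hlat : ∀ σ τ : (Λ → Bool), w σ * w τ ≤ w (σ ⊓ τ) * w (σ ⊔ τ) := by
    intro σ τ
    rw [hw σ, hw τ, hw (σ ⊓ τ), hw (σ ⊔ τ), ← Real.exp_add, ← Real.exp_add]
    apply Real.exp_le_exp.2
    rw [← mul_add, ← mul_add]
    apply mul_le_mul_of_nonneg_left _ hβ
    have hfield : (∑ i, h i * spin (σ i)) + (∑ i, h i * spin (τ i))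
        = (∑ i, h i * spin ((σ ⊓ τ) i)) + (∑ i, h i * spin ((σ ⊔ τ) i)) := by
      rw [← Finset.sum_add_distrib, ← Finset.sum_add_distrib]
      refine Finset.sum_congr rfl fun i _ => ?_
      rw [← mul_add, ← mul_add]
      have := spin_inf_add_spin_sup (σ i) (τ i)
      simp only [Pi.inf_apply, Pi.sup_apply]
      rw [this]
    have hpair : (∑ i, ∑ j, J i j * spin (σ i) * spin (σ j))
        + (∑ i, ∑ j, J i j * spin (τ i) * spin (τ j))
        ≤ (∑ i, ∑ j, J i j * spin ((σ ⊓ τ) i) * spin ((σ ⊓ τ) j))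
        + (∑ i, ∑ j, J i j * spin ((σ ⊔ τ) i) * spin ((σ ⊔ τ) j)) := by
      rw [← Finset.sum_add_distrib, ← Finset.sum_add_distrib]
      refine Finset.sum_le_sum fun i _ => ?_
      rw [← Finset.sum_add_distrib, ← Finset.sum_add_distrib]
      refine Finset.sum_le_sum fun j _ => ?_
      simp only [Pi.inf_apply, Pi.sup_apply, mul_assoc, ← mul_add]
      exact mul_le_mul_of_nonneg_left (spin_supermodular _ _ _ _) (hJ i j)
    linarith [mul_le_mul_of_nonneg_left hpair (by norm_num : (0:ℝ) ≤ 1/2)]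
  -- shift f and g to be nonnegative
  obtain ⟨C, hC⟩ : ∃ C : ℝ, ∀ σ, 0 ≤ f σ + C := by
    rcases isEmpty_or_nonempty (Λ → Bool) with hE | hE
    · exact ⟨0, fun σ => (IsEmpty.false σ).elim⟩
    · obtain ⟨σ₀, hσ₀⟩ := Finite.exists_min f
      exact ⟨-f σ₀ , fun σ => by linarith [hσ₀ σ]⟩
  obtain ⟨D, hD⟩ : ∃ D : ℝ, ∀ σ, 0 ≤ g σ + D := by
    rcases isEmpty_or_nonempty (Λ → Bool) with hE | hE
    · exact ⟨0, fun σ => (IsEmpty.false σ).elim⟩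
    · obtain ⟨σ₀, hσ₀⟩ := Finite.exists_min g
      exact ⟨-g σ₀ , fun σ => by linarith [hσ₀ σ]⟩
  have key := fkg (μ := w) (f := fun σ => f σ + C) (g := fun σ => g σ + D)
    hw0 hC hD (fun a b hab => by simpa using hf hab)
    (fun a b hab => by simpa using hg hab) hlat
  have e1 : (∑ σ : Λ → Bool, w σ * (f σ + C)) =
      (∑ σ : Λ → Bool, w σ * f σ) + C * ∑ σ : Λ → Bool, w σ := by
    rw [Finset.mul_sum, ← Finset.sum_add_distrib]; congr 1; ext σ; ring
  have e2 : (∑ σ : Λ → Bool, w σ * (g σ + D)) =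
      (∑ σ : Λ → Bool, w σ * g σ) + D * ∑ σ : Λ → Bool, w σ := by
    rw [Finset.mul_sum, ← Finset.sum_add_distrib]; congr 1; ext σ; ring
  have e3 : (∑ σ : Λ → Bool, w σ * ((f σ + C) * (g σ + D))) =
      (∑ σ : Λ → Bool, w σ * f σ * g σ) + D * (∑ σ : Λ → Bool, w σ * f σ)
      + C * (∑ σ : Λ → Bool, w σ * g σ) + C * D * ∑ σ : Λ → Bool, w σ := by
    simp only [Finset.mul_sum, ← Finset.sum_add_distrib]
    refine Finset.sum_congr rfl fun σ _ => by ring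
  rw [e1, e2, e3] at key
  nlinarith [key]
end

section
/- Let μ be a ferromagnetic Ising Gibbs measure on {−1,1}^Λ, Λ finite, with nonnegative magnetic fields h_i ≥ 0 and couplings J_{ij} ≥ 0. Then for every A ⊆ Λ, ⟨σ_A⟩_μ ≥ 0, where σ_A = Π_{i∈A} σ_i (first Griffiths inequality). -/
/-!
Call `w : {±1}^Λ → ℝ` positive when all its Walsh coefficients `∑_σ w σ σ_A` are
nonnegative. By Fourier inversion on the group `(Finset Λ, symmDiff)`, the coefficients of a
product are, up to the factor `2^|Λ|`, the convolution of the coefficients of the factors, so the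
positive functions form a subsemiring. It is closed under nonnegative scaling and topologically
closed, hence stable under the exponential series. The ferromagnetic Hamiltonian is a
nonnegative combination of spins and products of two spins, so the Boltzmann weight is
positive, and its coefficient at `A` is the sum in question.
-/

open Finset

lemma spin_mul_self (b : Bool) : spin b * spin b = 1 := by
  cases b <;> simp [spin]

noncomputable def walsh {Λ : Type*} (A : Finset Λ) (σ : Λ → Bool) : ℝ :=
  ∏ i ∈ A, spin (σ i)

lemma walsh_singleton {Λ : Type*} (i : Λ) : walsh {i} = fun σ => spin (σ i) :=
  funext fun _ => prod_singleton _ _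

section Walsh

variable {Λ : Type*} [Fintype Λ]

lemma sum_walsh_mul_walsh (σ τ : Λ → Bool) :
    ∑ A, walsh A σ * walsh A τ = if σ = τ then 2 ^ Fintype.card Λ else 0 := by
  have : ∑ A, walsh A σ * walsh A τ = ∏ i, (1 + spin (σ i) * spin (τ i)) := by
    simp only [prod_one_add, powerset_univ, walsh, prod_mul_distrib]
  rw [this]
  split_ifs with h
  · simp [h, spin_mul_self, one_add_one_eq_two]
  · obtain ⟨i, hi⟩ := Function.ne_iff.mp h
    refine prod_eq_zero (mem_univ i) ?_
    cases h1 : σ i <;> cases h2 : τ i <;> simp_all [spin]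

variable [DecidableEq Λ]

lemma walsh_eq_prod_ite (A : Finset Λ) (σ : Λ → Bool) :
    walsh A σ = ∏ i, if i ∈ A then spin (σ i) else 1 :=
  (Fintype.prod_ite_mem A _).symm

lemma walsh_mul_walsh (A B : Finset Λ) (σ : Λ → Bool) :
    walsh A σ * walsh B σ = walsh (symmDiff A B) σ := by
  simp only [walsh_eq_prod_ite, ← prod_mul_distrib, mem_symmDiff]
  refine prod_congr rfl fun i _ => ?_
  by_cases hA : i ∈ A <;> by_cases hB : i ∈ B <;> simp [hA, hB, spin_mul_self]

lemma sum_walsh_nonneg (A : Finset Λ) : 0 ≤ ∑ σ, walsh A σ := by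
  simp only [walsh_eq_prod_ite]
  rw [← Fintype.prod_sum fun i b => if i ∈ A then spin b else 1]
  refine prod_nonneg fun i _ => ?_
  split_ifs <;> simp [spin]

noncomputable def walshCoeff (w : (Λ → Bool) → ℝ) (A : Finset Λ) : ℝ :=
  ∑ σ, w σ * walsh A σ

lemma sum_walshCoeff_mul_walsh (w : (Λ → Bool) → ℝ) (σ : Λ → Bool) :
    ∑ A, walshCoeff w A * walsh A σ = 2 ^ Fintype.card Λ * w σ := by
  simp only [walshCoeff, sum_mul, mul_assoc]
  rw [sum_comm]
  simp only [← mul_sum, sum_walsh_mul_walsh, mul_ite, mul_zero, sum_ite_eq', mem_univ, if_true]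
  ring

lemma two_pow_card_mul_walshCoeff_mul (w v : (Λ → Bool) → ℝ) (A : Finset Λ) :
    2 ^ Fintype.card Λ * walshCoeff (w * v) A
      = ∑ B, walshCoeff v B * walshCoeff w (symmDiff B A) := by
  calc 2 ^ Fintype.card Λ * walshCoeff (w * v) A
      = ∑ σ, w σ * walsh A σ * (2 ^ Fintype.card Λ * v σ) := by
        simp only [walshCoeff, mul_sum, Pi.mul_apply]
        exact sum_congr rfl fun σ _ => by ring
    _ = ∑ σ, w σ * walsh A σ * ∑ B, walshCoeff v B * walsh B σ := by
        simp only [sum_walshCoeff_mul_walsh]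
    _ = ∑ B, walshCoeff v B * walshCoeff w (symmDiff B A) := by
        simp only [mul_sum, walshCoeff, ← walsh_mul_walsh]
        rw [sum_comm]
        exact sum_congr rfl fun B _ => sum_congr rfl fun σ _ => by ring

variable (Λ) in
noncomputable def walshCone : Subsemiring ((Λ → Bool) → ℝ) where
  carrier := {w | ∀ A, 0 ≤ walshCoeff w A}
  zero_mem' A := by simp [walshCoeff]
  one_mem' A := by simpa [walshCoeff] using sum_walsh_nonneg A
  add_mem' {w v} hw hv A := by
    simpa only [walshCoeff, Pi.add_apply, add_mul, sum_add_distrib] using add_nonneg (hw A) (hv A)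
  mul_mem' {w v} hw hv A := by
    refine nonneg_of_mul_nonneg_right ?_ (by positivity : (0 : ℝ) < 2 ^ Fintype.card Λ)
    rw [two_pow_card_mul_walshCoeff_mul]
    exact sum_nonneg fun B _ => mul_nonneg (hv B) (hw _)

lemma walsh_mem_walshCone (B : Finset Λ) : walsh B ∈ walshCone Λ := fun A => by
  simpa only [walshCoeff, walsh_mul_walsh] using sum_walsh_nonneg (symmDiff B A)

lemma smul_mem_walshCone {c : ℝ} (hc : 0 ≤ c) {w : (Λ → Bool) → ℝ}
    (hw : w ∈ walshCone Λ) : c • w ∈ walshCone Λ := fun A => by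
  simpa only [walshCoeff, Pi.smul_apply, smul_eq_mul, mul_assoc, ← mul_sum]
    using mul_nonneg hc (hw A)

lemma isClosed_walshCone : IsClosed (walshCone Λ : Set ((Λ → Bool) → ℝ)) := by
  have : (walshCone Λ : Set ((Λ → Bool) → ℝ)) = ⋂ A, {w | 0 ≤ walshCoeff w A} := by
    ext; simp [walshCone]
  rw [this]
  exact isClosed_iInter fun A => isClosed_le continuous_const (by unfold walshCoeff; fun_prop)

end Walsh

lemma NormedSpace.exp_mem_of_isClosed {𝔸 : Type*} [NormedRing 𝔸] [NormedAlgebra ℝ 𝔸]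
    [CompleteSpace 𝔸] {S : Subsemiring 𝔸} (hS : IsClosed (S : Set 𝔸))
    (hsmul : ∀ c : ℝ, 0 ≤ c → ∀ x ∈ S, c • x ∈ S) {x : 𝔸} (hx : x ∈ S) :
    NormedSpace.exp x ∈ S :=
  hS.mem_of_tendsto (NormedSpace.exp_series_hasSum_exp' (𝕂 := ℝ) x).tendsto_sum_nat <|
    Filter.Eventually.of_forall fun _ =>
      sum_mem fun n _ => hsmul _ (by positivity) _ (pow_mem hx n)

theorem griffiths_first_general (Λ : Type*) [Fintype Λ] [DecidableEq Λ]
    (β : ℝ) (hβ : 0 ≤ β) (h : Λ → ℝ) (hh : ∀ i, 0 ≤ h i)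
    (J : Λ → Λ → ℝ) (hJ : ∀ i j, 0 ≤ J i j)
    (w : (Λ → Bool) → ℝ)
    (hw : ∀ σ : Λ → Bool, w σ =
      Real.exp (β * ((∑ i, h i * spin (σ i)) +
        (1 / 2) * ∑ i, ∑ j, J i j * spin (σ i) * spin (σ j))))
    (A : Finset Λ) :
    0 ≤ ∑ σ : Λ → Bool, w σ * ∏ i ∈ A, spin (σ i) := by
  have hspin (i : Λ) : (fun σ : Λ → Bool => spin (σ i)) ∈ walshCone Λ :=
    walsh_singleton i ▸ walsh_mem_walshCone {i}
  set H : (Λ → Bool) → ℝ := β • (∑ i, h i • fun σ => spin (σ i)) +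
    (β / 2) • ∑ i, ∑ j, J i j • ((fun σ => spin (σ i)) * fun σ => spin (σ j))
  have hH : H ∈ walshCone Λ :=
    add_mem (smul_mem_walshCone hβ (sum_mem fun i _ => smul_mem_walshCone (hh i) (hspin i)))
      (smul_mem_walshCone (by positivity) (sum_mem fun i _ => sum_mem fun j _ =>
        smul_mem_walshCone (hJ i j) (mul_mem (hspin i) (hspin j))))
  have hwH : w = NormedSpace.exp H := by
    ext σ
    simp [hw, ← Real.exp_eq_exp_ℝ, H, Finset.sum_apply, mul_sum, mul_assoc, mul_add,
      div_eq_mul_inv]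
  rw [hwH]
  exact NormedSpace.exp_mem_of_isClosed isClosed_walshCone
    (fun c hc x hx => smul_mem_walshCone hc hx) hH A

/-- First Griffiths (GKS) inequality: for nonnegative fields and ferromagnetic couplings,
`⟨σ_A⟩ ≥ 0`. -/
theorem griffiths_first (Λ : Type*) [Fintype Λ] [DecidableEq Λ]
    (β : ℝ) (hβ : 0 ≤ β) (h : Λ → ℝ) (hh : ∀ i, 0 ≤ h i)
    (J : Λ → Λ → ℝ) (hJ : ∀ i j, 0 ≤ J i j) (hJsymm : ∀ i j, J i j = J j i)
    (w : (Λ → Bool) → ℝ)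
    (hw : ∀ σ : Λ → Bool, w σ =
      Real.exp (β * ((∑ i, h i * spin (σ i)) +
        (1 / 2) * ∑ i, ∑ j, J i j * spin (σ i) * spin (σ j))))
    (A : Finset Λ) :
    0 ≤ ∑ σ : Λ → Bool, w σ * ∏ i ∈ A, spin (σ i) :=
  griffiths_first_general Λ β hβ h hh J hJ w hw A
end

section
/- Let μ be a ferromagnetic Ising Gibbs measure on {−1,1}^Λ, Λ finite, with h_i ≥ 0 and J_{ij} ≥ 0. Then for every A, B ⊆ Λ, ⟨σ_A σ_B⟩_μ ≥ ⟨σ_A⟩_μ ⟨σ_B⟩_μ (second Griffiths inequality). -/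
open Finset

namespace Griffiths

lemma spin_mul_self (b : Bool) : spin b * spin b = 1 := by
  cases b <;> norm_num [spin]

lemma spin_eq_one_or_eq_neg_one (b : Bool) : spin b = 1 ∨ spin b = -1 := by
  cases b <;> simp [spin]

lemma spin_beq (a b : Bool) : spin (a == b) = spin a * spin b := by
  cases a <;> cases b <;> norm_num [spin]

variable {Λ : Type*}

noncomputable def chi (S : Finset Λ) (σ : Λ → Bool) : ℝ := ∏ i ∈ S, spin (σ i)

@[simp]
lemma chi_empty : chi (∅ : Finset Λ) = 1 := by
  ext σ; simp [chi]

@[simp]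
lemma chi_singleton (i : Λ) (σ : Λ → Bool) : chi {i} σ = spin (σ i) := by
  simp [chi]

lemma chi_mul_self (S : Finset Λ) (σ : Λ → Bool) : chi S σ * chi S σ = 1 := by
  rw [chi, ← prod_mul_distrib]
  exact prod_eq_one fun i _ => spin_mul_self (σ i)

lemma chi_eq_one_or_eq_neg_one (S : Finset Λ) (σ : Λ → Bool) : chi S σ = 1 ∨ chi S σ = -1 :=
  mul_self_eq_one_iff.mp (chi_mul_self S σ)

lemma chi_mul_chi [DecidableEq Λ] (S T : Finset Λ) (σ : Λ → Bool) :
    chi S σ * chi T σ = chi (symmDiff S T) σ := by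
  have hunion : S ∪ T = symmDiff S T ∪ (S ∩ T) := by
    ext x; simp only [mem_union, mem_symmDiff, mem_inter]; tauto
  have hdisj : Disjoint (symmDiff S T) (S ∩ T) := by
    rw [disjoint_left]
    intro x hx hx'
    simp only [mem_symmDiff, mem_inter] at hx hx'
    tauto
  rw [chi, chi, ← prod_union_inter, hunion, prod_union hdisj, mul_assoc, ← chi, ← chi,
    chi_mul_self, mul_one]

lemma sum_chi_nonneg [Fintype Λ] [DecidableEq Λ] (S : Finset Λ) :
    0 ≤ ∑ σ : Λ → Bool, chi S σ := by
  have hfactor : ∑ σ : Λ → Bool, chi S σ = ∏ i, ∑ b : Bool, if i ∈ S then spin b else 1 := by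
    rw [Fintype.prod_sum]
    refine Fintype.sum_congr _ _ fun σ => ?_
    rw [chi, prod_ite_mem, univ_inter]
  rw [hfactor]
  refine prod_nonneg fun i _ => ?_
  split_ifs <;> norm_num [spin]

variable (Λ) in
abbrev charCone : PointedCone ℝ ((Λ → Bool) → ℝ) := PointedCone.hull ℝ (Set.range chi)

lemma chi_mem_charCone (S : Finset Λ) : chi S ∈ charCone Λ :=
  Submodule.subset_span ⟨S, rfl⟩

lemma spin_apply_mem_charCone (i : Λ) : (fun σ : Λ → Bool => spin (σ i)) ∈ charCone Λ := by
  convert chi_mem_charCone {i} using 1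
  ext σ
  exact (chi_singleton i σ).symm

lemma one_mem_charCone : (1 : (Λ → Bool) → ℝ) ∈ charCone Λ :=
  chi_empty (Λ := Λ) ▸ chi_mem_charCone ∅

lemma mul_mem_charCone [DecidableEq Λ] {f g : (Λ → Bool) → ℝ} (hf : f ∈ charCone Λ)
    (hg : g ∈ charCone Λ) : f * g ∈ charCone Λ := by
  induction hf using Submodule.span_induction with
  | mem f hf =>
    induction hg using Submodule.span_induction with
    | mem g hg =>
      obtain ⟨S, rfl⟩ := hf
      obtain ⟨T, rfl⟩ := hg
      have hST : chi S * chi T = chi (symmDiff S T) := funext (chi_mul_chi S T)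
      exact hST ▸ chi_mem_charCone _
    | zero => simp
    | add g g' _ _ hg hg' => rw [mul_add]; exact add_mem hg hg'
    | smul a g _ hg => rw [mul_smul_comm]; exact Submodule.smul_mem _ a hg
  | zero => simp
  | add f f' _ _ hf hf' => rw [add_mul]; exact add_mem hf hf'
  | smul a f _ hf => rw [smul_mul_assoc]; exact Submodule.smul_mem _ a hf

lemma prod_mem_charCone [DecidableEq Λ] {ι : Type*} (s : Finset ι) (f : ι → (Λ → Bool) → ℝ)
    (hf : ∀ k ∈ s, f k ∈ charCone Λ) : (fun σ => ∏ k ∈ s, f k σ) ∈ charCone Λ := by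
  induction s using Finset.cons_induction with
  | empty => exact one_mem_charCone
  | cons k s hk ih =>
    simp only [prod_cons]
    exact mul_mem_charCone (hf k (mem_cons_self k s))
      (ih fun l hl => hf l (mem_cons_of_mem hl))

lemma sum_nonneg_of_mem_charCone [Fintype Λ] [DecidableEq Λ] {f : (Λ → Bool) → ℝ}
    (hf : f ∈ charCone Λ) : 0 ≤ ∑ σ, f σ := by
  induction hf using Submodule.span_induction with
  | mem f hf => obtain ⟨S, rfl⟩ := hf; exact sum_chi_nonneg S
  | zero => simp
  | add f g _ _ hf hg => simpa [sum_add_distrib] using add_nonneg hf hg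
  | smul a f _ hf =>
    simp only [Pi.smul_apply, ← smul_sum]
    exact mul_nonneg a.2 hf

/-- On a `±1`-valued function, `exp (a f) = cosh a + sinh a * f`. -/
lemma exp_mul_mem_charCone {a : ℝ} (ha : 0 ≤ a) {f : (Λ → Bool) → ℝ} (hf : f ∈ charCone Λ)
    (hf_sign : ∀ σ, f σ = 1 ∨ f σ = -1) : (fun σ => Real.exp (a * f σ)) ∈ charCone Λ := by
  have hexp : (fun σ => Real.exp (a * f σ)) = Real.cosh a • 1 + Real.sinh a • f := by
    ext σ
    rcases hf_sign σ with h | h <;> simp [h, ← Real.cosh_add_sinh]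
  rw [hexp]
  exact add_mem ((charCone Λ).smul_mem (Real.cosh_pos a).le one_mem_charCone)
    ((charCone Λ).smul_mem (Real.sinh_nonneg_iff.mpr ha) hf)

lemma exp_sum_mem_charCone [DecidableEq Λ] {ι : Type*} (s : Finset ι) {a : ι → ℝ}
    (ha : ∀ k ∈ s, 0 ≤ a k) {f : ι → (Λ → Bool) → ℝ} (hf : ∀ k ∈ s, f k ∈ charCone Λ)
    (hf_sign : ∀ k ∈ s, ∀ σ, f k σ = 1 ∨ f k σ = -1) :
    (fun σ => Real.exp (∑ k ∈ s, a k * f k σ)) ∈ charCone Λ := by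
  simp only [Real.exp_sum]
  exact prod_mem_charCone s _ fun k hk => exp_mul_mem_charCone (ha k hk) (hf k hk) (hf_sign k hk)

def spinMul (σ τ : Λ → Bool) : Λ → Bool := fun i => σ i == τ i

lemma spinMul_involutive (σ : Λ → Bool) : Function.Involutive (spinMul σ) := by
  intro τ; funext i; unfold spinMul; cases σ i <;> cases τ i <;> rfl

lemma chi_spinMul (S : Finset Λ) (σ τ : Λ → Bool) :
    chi S (spinMul σ τ) = chi S σ * chi S τ := by
  rw [chi, chi, chi, ← prod_mul_distrib]
  exact prod_congr rfl fun i _ => spin_beq _ _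

lemma sum_spinMul [Fintype Λ] [DecidableEq Λ] (σ : Λ → Bool) (F : (Λ → Bool) → ℝ) :
    ∑ τ, F (spinMul σ τ) = ∑ τ, F τ :=
  Fintype.sum_bijective _ (spinMul_involutive σ).bijective _ _ fun _ => rfl

/-- Ginibre's duplication: the substitution `τ = σ t` in the double sum over `(σ, τ)`. -/
lemma sum_mul_sum_sub_sum_mul_sum [Fintype Λ] [DecidableEq Λ] (w f : (Λ → Bool) → ℝ)
    (B : Finset Λ) :
    (∑ σ, w σ * f σ * chi B σ) * (∑ σ, w σ) - (∑ σ, w σ * f σ) * (∑ σ, w σ * chi B σ) =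
      ∑ t, (1 - chi B t) * ∑ σ, w σ * w (spinMul σ t) * f σ * chi B σ := by
  rw [sum_mul_sum, sum_mul_sum, ← sum_sub_distrib]
  simp_rw [← sum_sub_distrib]
  calc ∑ σ, ∑ τ, (w σ * f σ * chi B σ * w τ - w σ * f σ * (w τ * chi B τ))
      = ∑ σ, ∑ t, (w σ * f σ * chi B σ * w (spinMul σ t)
          - w σ * f σ * (w (spinMul σ t) * chi B (spinMul σ t))) :=
        sum_congr rfl fun σ _ => (sum_spinMul σ _).symm
    _ = ∑ t, ∑ σ, (w σ * f σ * chi B σ * w (spinMul σ t)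
          - w σ * f σ * (w (spinMul σ t) * chi B (spinMul σ t))) := sum_comm
    _ = ∑ t, (1 - chi B t) * ∑ σ, w σ * w (spinMul σ t) * f σ * chi B σ := by
        refine sum_congr rfl fun t _ => ?_
        rw [mul_sum]
        refine sum_congr rfl fun σ _ => ?_
        rw [chi_spinMul]
        ring

variable [Fintype Λ]

noncomputable def isingEnergy (h : Λ → ℝ) (J : Λ → Λ → ℝ) (σ : Λ → Bool) : ℝ :=
  (∑ i, h i * spin (σ i)) + (1 / 2) * ∑ i, ∑ j, J i j * spin (σ i) * spin (σ j)

lemma isingEnergy_add_isingEnergy_spinMul (h : Λ → ℝ) (J : Λ → Λ → ℝ) (σ t : Λ → Bool) :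
    isingEnergy h J σ + isingEnergy h J (spinMul σ t) =
      (∑ i, h i * (1 + spin (t i)) * spin (σ i)) +
        ∑ p : Λ × Λ, J p.1 p.2 / 2 * (1 + spin (t p.1) * spin (t p.2)) *
          (spin (σ p.1) * spin (σ p.2)) := by
  simp only [isingEnergy, spinMul, spin_beq, ← univ_product_univ, sum_product, mul_sum,
    ← sum_add_distrib]
  refine sum_congr rfl fun i _ => ?_
  rw [add_add_add_comm, ← sum_add_distrib]
  congr 1
  · ring
  · exact sum_congr rfl fun j _ => by ring

lemma exp_isingEnergy_mul_exp_isingEnergy_spinMul_mem_charCone [DecidableEq Λ] {β : ℝ}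
    (hβ : 0 ≤ β) {h : Λ → ℝ} (hh : ∀ i, 0 ≤ h i) {J : Λ → Λ → ℝ} (hJ : ∀ i j, 0 ≤ J i j)
    (t : Λ → Bool) :
    (fun σ => Real.exp (β * isingEnergy h J σ) * Real.exp (β * isingEnergy h J (spinMul σ t)))
      ∈ charCone Λ := by
  have one_add_spin_nonneg (b : Bool) : 0 ≤ 1 + spin b := by
    rcases spin_eq_one_or_eq_neg_one b with hb | hb <;> norm_num [hb]
  have one_add_spin_mul_spin_nonneg (a b : Bool) : 0 ≤ 1 + spin a * spin b := by
    rw [← spin_beq]; exact one_add_spin_nonneg _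
  have hsplit (σ : Λ → Bool) :
      Real.exp (β * isingEnergy h J σ) * Real.exp (β * isingEnergy h J (spinMul σ t)) =
        Real.exp (∑ i, β * h i * (1 + spin (t i)) * spin (σ i)) *
          Real.exp (∑ p : Λ × Λ, β * (J p.1 p.2 / 2) * (1 + spin (t p.1) * spin (t p.2)) *
            (spin (σ p.1) * spin (σ p.2))) := by
    rw [← Real.exp_add, ← Real.exp_add, ← mul_add, isingEnergy_add_isingEnergy_spinMul, mul_add,
      mul_sum, mul_sum]
    simp only [mul_assoc]
  simp only [hsplit]
  have hfield :
      (fun σ : Λ → Bool => Real.exp (∑ i, β * h i * (1 + spin (t i)) * spin (σ i))) ∈ charCone Λ :=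
    exp_sum_mem_charCone univ
      (fun i _ => mul_nonneg (mul_nonneg hβ (hh i)) (one_add_spin_nonneg _))
      (fun i _ => spin_apply_mem_charCone i) (fun i _ σ => spin_eq_one_or_eq_neg_one _)
  have hcoupling : (fun σ : Λ → Bool => Real.exp (∑ p : Λ × Λ, β * (J p.1 p.2 / 2) *
      (1 + spin (t p.1) * spin (t p.2)) * (spin (σ p.1) * spin (σ p.2)))) ∈ charCone Λ :=
    exp_sum_mem_charCone univ
      (fun p _ => mul_nonneg (mul_nonneg hβ (div_nonneg (hJ p.1 p.2) zero_le_two))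
        (one_add_spin_mul_spin_nonneg _ _))
      (fun p _ => mul_mem_charCone (spin_apply_mem_charCone p.1) (spin_apply_mem_charCone p.2))
      (fun p _ σ => by simpa only [spin_beq] using spin_eq_one_or_eq_neg_one (σ p.1 == σ p.2))
  exact mul_mem_charCone hfield hcoupling

end Griffiths

open Griffiths in
theorem griffiths_second_general (Λ : Type*) [Fintype Λ] [DecidableEq Λ]
    (β : ℝ) (hβ : 0 ≤ β) (h : Λ → ℝ) (hh : ∀ i, 0 ≤ h i)
    (J : Λ → Λ → ℝ) (hJ : ∀ i j, 0 ≤ J i j)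
    (w : (Λ → Bool) → ℝ)
    (hw : ∀ σ : Λ → Bool, w σ =
      Real.exp (β * ((∑ i, h i * spin (σ i)) +
        (1 / 2) * ∑ i, ∑ j, J i j * spin (σ i) * spin (σ j))))
    (A B : Finset Λ) :
    (∑ σ : Λ → Bool, w σ * (∏ i ∈ A, spin (σ i)) * (∏ i ∈ B, spin (σ i))) *
        (∑ σ : Λ → Bool, w σ)
      ≥ (∑ σ : Λ → Bool, w σ * ∏ i ∈ A, spin (σ i)) *
        (∑ σ : Λ → Bool, w σ * ∏ i ∈ B, spin (σ i)) := by
  obtain rfl : w = fun σ => Real.exp (β * isingEnergy h J σ) := funext hw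
  change (∑ σ, _ * chi A σ * chi B σ) * _ ≥ (∑ σ, _ * chi A σ) * (∑ σ, _ * chi B σ)
  rw [ge_iff_le, ← sub_nonneg, sum_mul_sum_sub_sum_mul_sum]
  refine sum_nonneg fun t _ => mul_nonneg ?_ (sum_nonneg_of_mem_charCone ?_)
  · rcases chi_eq_one_or_eq_neg_one B t with hB | hB <;> norm_num [hB]
  · exact mul_mem_charCone (mul_mem_charCone
      (exp_isingEnergy_mul_exp_isingEnergy_spinMul_mem_charCone hβ hh hJ t)
      (chi_mem_charCone A)) (chi_mem_charCone B)

/-- Second Griffiths (GKS) inequality: for nonnegative fields and ferromagnetic couplings,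
`⟨σ_A σ_B⟩ ≥ ⟨σ_A⟩⟨σ_B⟩`. -/
theorem griffiths_second (Λ : Type*) [Fintype Λ] [DecidableEq Λ]
    (β : ℝ) (hβ : 0 ≤ β) (h : Λ → ℝ) (hh : ∀ i, 0 ≤ h i)
    (J : Λ → Λ → ℝ) (hJ : ∀ i j, 0 ≤ J i j) (hJsymm : ∀ i j, J i j = J j i)
    (w : (Λ → Bool) → ℝ)
    (hw : ∀ σ : Λ → Bool, w σ =
      Real.exp (β * ((∑ i, h i * spin (σ i)) +
        (1 / 2) * ∑ i, ∑ j, J i j * spin (σ i) * spin (σ j))))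
    (A B : Finset Λ) :
    (∑ σ : Λ → Bool, w σ * (∏ i ∈ A, spin (σ i)) * (∏ i ∈ B, spin (σ i))) *
        (∑ σ : Λ → Bool, w σ)
      ≥ (∑ σ : Λ → Bool, w σ * ∏ i ∈ A, spin (σ i)) *
        (∑ σ : Λ → Bool, w σ * ∏ i ∈ B, spin (σ i)) :=
  griffiths_second_general Λ β hβ h hh J hJ w hw A B
end
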